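/- arXiv:1603.05456 — 3 statements merged into one kernel-verified Lean document; each statement's English description precedes it below -/
import Mathlib

section
/- Let n ≥ 2 be a natural number, U ⊆ EuclideanSpace ℝ (Fin n) a nonempty open connected set, and f : EuclideanSpace ℝ (Fin n) → ℝ a C² function satisfying, for every x ∈ U and all v, w, the flat Miao–Tam equation Hess f(x)(v, w) − Δf(x)·⟪v, w⟫ = ⟪v, w⟫. Then there exist a ∈ EuclideanSpace ℝ (Fin n) and c ∈ ℝ such that f(x) = c − ‖x − a‖²/(2(n−1)) for all x ∈ U. -/
open RealInnerProductSpace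

/-- The Hessian of `f` at `x`, as a bilinear form: the second Fréchet derivative. -/
noncomputable def Hess {n : ℕ} (f : EuclideanSpace ℝ (Fin n) → ℝ)
    (x v w : EuclideanSpace ℝ (Fin n)) : ℝ :=
  iteratedFDeriv ℝ 2 f x ![v, w]

/-- The Laplacian of `f` at `x`: the trace of the Hessian with respect to the
standard orthonormal basis of Euclidean space. -/
noncomputable def lap {n : ℕ} (f : EuclideanSpace ℝ (Fin n) → ℝ)
    (x : EuclideanSpace ℝ (Fin n)) : ℝ :=
  ∑ i : Fin n, Hess f x (EuclideanSpace.single i 1) (EuclideanSpace.single i 1)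

/-!
Taking the trace of `Hess f − (Δf) g = g` gives `Δf = n (1 + Δf)`, so `Δf = n / (1 − n)` and
`Hess f = (1 − n)⁻¹ g` on `U`. Integrating twice on the connected set `U`, the gradient of `f` is
`κ (x − a)` with `κ = (1 − n)⁻¹` (the constant of integration is absorbed into `a` through the
Riesz representation), and then `f = κ ‖x − a‖² / 2 + c`.
-/

section Quadratic

variable {E : Type*} [NormedAddCommGroup E] [InnerProductSpace ℝ E] {U : Set E} {f : E → ℝ}
  {κ : ℝ}

theorem hasFDerivAt_div_two_mul_norm_sub_sq (κ : ℝ) (a x : E) :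
    HasFDerivAt (fun y => κ / 2 * ‖y - a‖ ^ 2) (κ • innerSL ℝ (x - a)) x := by
  refine (((hasFDerivAt_id x).sub_const a).norm_sq.const_mul (κ / 2)).congr_fderiv ?_
  ext v
  simp only [id_eq, map_sub, ContinuousLinearMap.comp_id, smul_apply, sub_apply, coe_innerSL_apply,
    nsmul_eq_mul, Nat.cast_ofNat, smul_eq_mul]
  ring

theorem IsOpen.exists_fderiv_eq_smul_innerSL_sub [CompleteSpace E] (hUo : IsOpen U)
    (hUc : IsPreconnected U) (hf : DifferentiableOn ℝ (fderiv ℝ f) U) (hκ : κ ≠ 0)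
    (hH : ∀ x ∈ U, fderiv ℝ (fderiv ℝ f) x = κ • innerSL ℝ) :
    ∃ a, ∀ x ∈ U, fderiv ℝ f x = κ • innerSL ℝ (x - a) := by
  obtain ⟨L, hL⟩ := hUo.exists_eq_add_of_fderiv_eq hUc hf
    (κ • innerSL ℝ (E := E)).differentiable.differentiableOn
    fun x hx => by rw [hH x hx, ContinuousLinearMap.fderiv]
  refine ⟨-κ⁻¹ • (InnerProductSpace.toDual ℝ E).symm L, fun x hx => ?_⟩
  ext v
  rw [hL hx]
  simp only [smul_apply, add_apply, smul_eq_mul, neg_smul, sub_neg_eq_add, map_add, map_smul,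
    smul_add, smul_inv_smul₀ hκ]
  exact congrArg _ InnerProductSpace.toDual_symm_apply.symm

theorem IsOpen.exists_eq_mul_norm_sub_sq_add (hUo : IsOpen U) (hUc : IsPreconnected U)
    (hf : DifferentiableOn ℝ f U) {a : E}
    (hdf : ∀ x ∈ U, fderiv ℝ f x = κ • innerSL ℝ (x - a)) :
    ∃ c, ∀ x ∈ U, f x = κ / 2 * ‖x - a‖ ^ 2 + c :=
  hUo.exists_eq_add_of_fderiv_eq hUc hf
    (fun x _ => (hasFDerivAt_div_two_mul_norm_sub_sq κ a x).differentiableAt.differentiableWithinAt)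
    fun x hx => by rw [hdf x hx, (hasFDerivAt_div_two_mul_norm_sub_sq κ a x).fderiv]

end Quadratic

section Euclidean

variable {n : ℕ} {f : EuclideanSpace ℝ (Fin n) → ℝ} {x : EuclideanSpace ℝ (Fin n)} {μ : ℝ}

theorem lap_eq_of_hess_eq (h : ∀ v w, Hess f x v w = μ * ⟪v, w⟫) : lap f x = n * μ := by
  simp [lap, h]

theorem fderiv_fderiv_eq_of_hess_eq (h : ∀ v w, Hess f x v w = μ * ⟪v, w⟫) :
    fderiv ℝ (fderiv ℝ f) x = μ • innerSL ℝ := by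
  ext v w
  show _ = μ * ⟪v, w⟫
  simpa [Hess, iteratedFDeriv_two_apply] using h v w

theorem hess_eq_of_hess_sub_lap_mul_inner_eq_inner
    (h : ∀ v w, Hess f x v w - lap f x * ⟪v, w⟫ = ⟪v, w⟫) (v w : EuclideanSpace ℝ (Fin n)) :
    Hess f x v w = (1 - (n : ℝ))⁻¹ * ⟪v, w⟫ := by
  have hHess : ∀ v w, Hess f x v w = (1 + lap f x) * ⟪v, w⟫ := fun v w => by
    linarith [h v w]
  have hlap := lap_eq_of_hess_eq hHess
  have hprod : (1 + lap f x) * (1 - n) = 1 := by linear_combination hlap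
  rw [hHess, eq_inv_of_mul_eq_one_left hprod]

end Euclidean

theorem stmt_6_general (n : ℕ) (hn : 2 ≤ n) (U : Set (EuclideanSpace ℝ (Fin n)))
    (hUo : IsOpen U) (hUc : IsConnected U)
    (f : EuclideanSpace ℝ (Fin n) → ℝ) (hf : ContDiff ℝ 2 f)
    (heq : ∀ x ∈ U, ∀ v w : EuclideanSpace ℝ (Fin n),
      Hess f x v w - lap f x * ⟪v, w⟫ = ⟪v, w⟫) :
    ∃ (a : EuclideanSpace ℝ (Fin n)) (c : ℝ),
      ∀ x ∈ U, f x = c - ‖x - a‖ ^ 2 / (2 * ((n : ℝ) - 1)) := by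
  have hn1 : (1 : ℝ) - n ≠ 0 := by
    have : (2 : ℝ) ≤ n := by exact_mod_cast hn
    linarith
  have hH : ∀ x ∈ U, fderiv ℝ (fderiv ℝ f) x = (1 - (n : ℝ))⁻¹ • innerSL ℝ := fun x hx =>
    fderiv_fderiv_eq_of_hess_eq (hess_eq_of_hess_sub_lap_mul_inner_eq_inner (heq x hx))
  obtain ⟨a, ha⟩ := hUo.exists_fderiv_eq_smul_innerSL_sub hUc.isPreconnected
    ((hf.fderiv_right le_rfl).differentiable one_ne_zero).differentiableOn (inv_ne_zero hn1) hH
  obtain ⟨c, hc⟩ := hUo.exists_eq_mul_norm_sub_sq_add hUc.isPreconnected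
    (hf.differentiable two_ne_zero).differentiableOn ha
  refine ⟨a, c, fun x hx => ?_⟩
  rw [hc x hx, show (1 : ℝ) - n = -(n - 1) by ring]
  field_simp
  ring

/-- A `C²` solution of the flat Miao–Tam equation `Hess f − (Δf) g = g` on a nonempty
open connected set is, up to translation and additive constant, the model quadratic
potential: `f(x) = c − ‖x − a‖²/(2(n−1))`. -/
theorem stmt_6 (n : ℕ) (hn : 2 ≤ n) (U : Set (EuclideanSpace ℝ (Fin n)))
    (hUo : IsOpen U) (hUne : U.Nonempty) (hUc : IsConnected U)
    (f : EuclideanSpace ℝ (Fin n) → ℝ) (hf : ContDiff ℝ 2 f)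
    (heq : ∀ x ∈ U, ∀ v w : EuclideanSpace ℝ (Fin n),
      Hess f x v w - lap f x * ⟪v, w⟫ = ⟪v, w⟫) :
    ∃ (a : EuclideanSpace ℝ (Fin n)) (c : ℝ),
      ∀ x ∈ U, f x = c - ‖x - a‖ ^ 2 / (2 * ((n : ℝ) - 1)) :=
  stmt_6_general n hn U hUo hUc f hf heq
end

section
/- Let n ≥ 3 be a natural number. Let Ω ⊆ EuclideanSpace ℝ (Fin n) be a compact connected set that equals the closure of its (nonempty) interior, and let f : EuclideanSpace ℝ (Fin n) → ℝ be a C² function such that for every x in Ω and all v, w, Hess f(x)(v, w) − Δf(x)·⟪v, w⟫ = ⟪v, w⟫, and such that {x ∈ Ω : f(x) = 0} equals the topological frontier of Ω. Then there exist a ∈ EuclideanSpace ℝ (Fin n) and ρ > 0 such that Ω = Metric.closedBall a ρ and f(x) = (ρ² − ‖x − a‖²)/(2(n−1)) for all x ∈ Ω. -/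
/-! Tracing the equation gives `(n - 1) Hess f = -g`. With `ν = n - 1`, the map
`ψ x = x + ν ∇f x` has zero derivative in the interior, and then so does `2ν f + ‖x - ψ x‖²`.
Hence on a component `U` of the interior, `ψ ≡ a` and `f = (r - ‖x - a‖²) / (2ν)`; as `f`
vanishes on `∂U` but nowhere in `U`, `U` is the ball of radius `√r` about `a`. Distinct
components are disjoint balls, so the center of one is not in another. Thus `ψ` maps
`Ω = closure (interior Ω)` into `{a₀} ∪ (ball a₀ ρ₀)ᶜ`, where `a₀` is isolated; `Ω` being
connected, `ψ ≡ a₀`, so the interior is the single ball `ball a₀ ρ₀`. -/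

open RealInnerProductSpace

open Metric Set Bornology InnerProductSpace
open scoped Gradient

theorem IsPreconnected.subset_of_disjoint_frontier {X : Type*} [TopologicalSpace X]
    {s U : Set X} (hs : IsPreconnected s) (hU : IsOpen U) (hsU : (s ∩ U).Nonempty)
    (hfr : Disjoint s (frontier U)) : s ⊆ U :=
  hs.subset_of_closure_inter_subset hU hsU fun x ⟨hxc, hxs⟩ ↦ by
    by_contra hxU
    exact hfr.ne_of_mem hxs ⟨hxc, by rwa [hU.interior_eq]⟩ rfl

theorem connectedComponentIn_eq_of_mem_of_mem {X : Type*} [TopologicalSpace X] {F : Set X}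
    {x y w : X} (hx : w ∈ connectedComponentIn F x) (hy : w ∈ connectedComponentIn F y) :
    connectedComponentIn F x = connectedComponentIn F y :=
  (connectedComponentIn_eq hx).trans (connectedComponentIn_eq hy).symm

theorem frontier_connectedComponentIn_interior_subset {X : Type*} [TopologicalSpace X]
    [LocallyConnectedSpace X] {s : Set X} (hs : IsClosed s) (z : X) :
    frontier (connectedComponentIn (interior s) z) ⊆ frontier s := by
  have hU : IsOpen (connectedComponentIn (interior s) z) := isOpen_interior.connectedComponentIn
  intro y hy
  rw [hU.frontier_eq] at hy
  rw [hs.frontier_eq]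
  refine ⟨hs.closure_subset_iff.2 ((connectedComponentIn_subset _ _).trans interior_subset)
    hy.1, fun hyi ↦ hy.2 ?_⟩
  obtain ⟨u, huy, huz⟩ := _root_.mem_closure_iff.1 hy.1 _
    isOpen_interior.connectedComponentIn (mem_connectedComponentIn hyi)
  rw [← connectedComponentIn_eq_of_mem_of_mem huy huz]
  exact mem_connectedComponentIn hyi

theorem IsPreconnected.subset_singleton_of_subset_insert_compl_ball {E : Type*}
    [PseudoMetricSpace E] {s : Set E} {a : E} {r : ℝ} (hs : IsPreconnected s) (ha : a ∈ s)
    (hr : 0 < r) (h : s ⊆ insert a (ball a r)ᶜ) : s ⊆ {a} := by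
  have hsub : s ⊆ ball a (r / 2) := by
    refine hs.subset_left_of_subset_union isOpen_ball isClosed_closedBall.isOpen_compl
      (disjoint_compl_right.mono_right (compl_subset_compl.2 ball_subset_closedBall))
      (fun x hx ↦ ?_) ⟨a, ha, mem_ball_self (half_pos hr)⟩
    rcases h hx with rfl | hx'
    · exact Or.inl (mem_ball_self (half_pos hr))
    · exact Or.inr fun hxc ↦ hx' (mem_ball.2 (by linarith [mem_closedBall.1 hxc]))
  intro x hx
  rcases h hx with rfl | hx'
  · rfl
  · exact absurd (ball_subset_ball (half_le_self hr.le) (hsub hx)) hx'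

theorem IsOpen.eq_ball_of_frontier_subset_sphere {E : Type*} [NormedAddCommGroup E]
    [NormedSpace ℝ E] {U : Set E} {a : E} {ρ : ℝ} (hU : IsOpen U) (hUb : IsBounded U)
    (hne : U.Nonempty) (hρ : 0 ≤ ρ) (hfr : frontier U ⊆ sphere a ρ)
    (hdisj : Disjoint U (sphere a ρ)) : U = ball a ρ := by
  have hsub : U ⊆ ball a ρ := by
    intro x hx
    by_contra hxb
    have hxa : ρ < dist x a := (not_lt.1 hxb).lt_of_ne fun h ↦ hdisj.ne_of_mem hx h.symm rfl
    have hdist : ∀ t : ℝ, 1 ≤ t → dist (a + t • (x - a)) a = t * dist x a := fun t ht ↦ by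
      rw [dist_eq_norm, add_sub_cancel_left, norm_smul, Real.norm_of_nonneg (by linarith),
        dist_eq_norm]
    -- the ray from `a` through `x`, beyond `x`, avoids `closedBall a ρ`, so it stays in `U`
    have hray : (fun t : ℝ ↦ a + t • (x - a)) '' Ici 1 ⊆ U := by
      refine (isPreconnected_Ici.image _ (by fun_prop)).subset_of_disjoint_frontier hU
        ⟨x, ⟨1, self_mem_Ici, by simp⟩, hx⟩ (Disjoint.mono_right hfr ?_)
      rw [Set.disjoint_left]
      rintro _ ⟨t, ht, rfl⟩ hs
      rw [mem_sphere, hdist t ht] at hs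
      nlinarith [mem_Ici.1 ht]
    obtain ⟨C, hC⟩ := (isBounded_iff_subset_closedBall a).1 hUb
    have hxa0 : 0 < dist x a := hρ.trans_lt hxa
    have ht : 1 ≤ |C| / dist x a + 1 := by
      have := div_nonneg (abs_nonneg C) hxa0.le
      linarith
    have hmem := mem_closedBall.1 (hC (hray ⟨_, ht, rfl⟩))
    rw [hdist _ ht, add_mul, div_mul_cancel₀ _ hxa0.ne'] at hmem
    linarith [le_abs_self C]
  obtain ⟨x, hx⟩ := hne
  exact hsub.antisymm <| (convex_ball a ρ).isPreconnected.subset_of_disjoint_frontier hU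
    ⟨x, hsub hx, hx⟩ (sphere_disjoint_ball.symm.mono_right hfr)

theorem IsOpen.eq_ball_of_two_mul_add_norm_sq_eq {E : Type*} [NormedAddCommGroup E]
    [NormedSpace ℝ E] [Nontrivial E] {U : Set E} {f : E → ℝ} {a : E} {ν r : ℝ} (hU : IsOpen U)
    (hUb : IsBounded U) (hne : U.Nonempty) (hν : ν ≠ 0)
    (hr : ∀ x ∈ closure U, 2 * ν * f x + ‖x - a‖ ^ 2 = r)
    (hfr : ∀ x ∈ frontier U, f x = 0) (hfU : ∀ x ∈ U, f x ≠ 0) :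
    ∃ ρ, r = ρ ^ 2 ∧ U = ball a ρ := by
  obtain ⟨m, hm⟩ := nonempty_frontier_iff.2
    ⟨hne, fun h ↦ NormedSpace.unbounded_univ ℝ E (h ▸ hUb)⟩
  have hrm : r = ‖m - a‖ ^ 2 := by
    rw [← hr m hm.1, hfr m hm, mul_zero, zero_add]
  have hsphere : ∀ x ∈ closure U, x ∈ sphere a ‖m - a‖ ↔ f x = 0 := fun x hx ↦ by
    have hx := hrm ▸ hr x hx
    rw [mem_sphere, dist_eq_norm, ← sq_eq_sq₀ (norm_nonneg _) (norm_nonneg _)]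
    constructor <;> intro h
    · simpa [hν] using hx.trans h.symm
    · simpa [h] using hx
  refine ⟨‖m - a‖, hrm, hU.eq_ball_of_frontier_subset_sphere hUb hne (norm_nonneg _)
    (fun x hx ↦ (hsphere x hx.1).2 (hfr x hx)) ?_⟩
  exact Set.disjoint_left.2 fun x hxU hxs ↦ hfU x hxU ((hsphere x (subset_closure hxU)).1 hxs)

section Center

variable {H : Type*} [NormedAddCommGroup H] [InnerProductSpace ℝ H] [CompleteSpace H]
  {ν : ℝ} {f : H → ℝ} {U : Set H} {x a : H}

/-- For `f x = (r - ‖x - a‖²) / (2ν)` this is the constant `a`. -/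
noncomputable def potentialCenter (ν : ℝ) (f : H → ℝ) (x : H) : H := x + ν • ∇ f x

theorem continuous_potentialCenter (hf : Continuous (fderiv ℝ f)) :
    Continuous (potentialCenter ν f) :=
  continuous_id.add (((toDual ℝ H).symm.continuous.comp hf).const_smul ν)

theorem hasFDerivAt_potentialCenter_zero (hf : DifferentiableAt ℝ (fderiv ℝ f) x)
    (hH : ∀ v w, ν * fderiv ℝ (fderiv ℝ f) x v w = -⟪v, w⟫) :
    HasFDerivAt (potentialCenter ν f) (0 : H →L[ℝ] H) x := by
  have hgrad := (toDual ℝ H).symm.toContinuousLinearEquiv.hasFDerivAt.comp x hf.hasFDerivAt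
  refine ((hasFDerivAt_id x).add (hgrad.const_smul ν)).congr_fderiv ?_
  ext1 v
  refine ext_inner_right ℝ fun w ↦ ?_
  simp [inner_add_left, real_inner_smul_left, toDual_symm_apply, hH]

theorem IsOpen.exists_potentialCenter_eq (hU : IsOpen U) (hU' : IsPreconnected U)
    (hf : ContDiff ℝ 2 f)
    (hH : ∀ x ∈ U, ∀ v w, ν * fderiv ℝ (fderiv ℝ f) x v w = -⟪v, w⟫) :
    ∃ a, ∀ x ∈ U, potentialCenter ν f x = a := by
  have hd : Differentiable ℝ (fderiv ℝ f) :=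
    (hf.fderiv_right (m := 1) le_rfl).differentiable one_ne_zero
  have hderiv := fun x hx ↦ hasFDerivAt_potentialCenter_zero (hd x) (hH x hx)
  exact hU.exists_is_const_of_fderiv_eq_zero hU'
    (fun x hx ↦ (hderiv x hx).differentiableAt.differentiableWithinAt)
    fun x hx ↦ (hderiv x hx).fderiv

theorem IsOpen.exists_two_mul_add_norm_sq_eq (hU : IsOpen U) (hU' : IsPreconnected U)
    (hf : Differentiable ℝ f) (ha : ∀ x ∈ U, potentialCenter ν f x = a) :
    ∃ r, ∀ x ∈ U, 2 * ν * f x + ‖x - a‖ ^ 2 = r := by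
  have hderiv : ∀ x, HasFDerivAt (fun y ↦ 2 * ν * f y + ‖y - a‖ ^ 2)
      ((2 * ν) • fderiv ℝ f x + 2 • innerSL ℝ (x - a) ∘L ContinuousLinearMap.id ℝ H) x :=
    fun x ↦ ((hf x).hasFDerivAt.const_mul _).add (((hasFDerivAt_id x).sub_const a).norm_sq)
  refine hU.exists_is_const_of_fderiv_eq_zero hU' (fun x _ ↦
    (hderiv x).differentiableAt.differentiableWithinAt) fun x hx ↦ ?_
  have hxa : x - a = -(ν • ∇ f x) := by
    rw [← ha x hx, potentialCenter]; abel
  ext w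
  simp only [(hderiv x).fderiv, hxa, gradient, map_neg, map_smul, ContinuousLinearMap.comp_id,
    smul_neg, add_apply, smul_apply, smul_eq_mul, neg_apply, coe_innerSL_apply, toDual_symm_apply,
    nsmul_eq_mul, Nat.cast_ofNat, Pi.zero_apply, zero_apply]
  ring

variable [Nontrivial H] {Ω : Set H} {z : H}

theorem connectedComponentIn_interior_eq_ball (hf : ContDiff ℝ 2 f) (hν : ν ≠ 0)
    (hH : ∀ x ∈ interior Ω, ∀ v w, ν * fderiv ℝ (fderiv ℝ f) x v w = -⟪v, w⟫)
    (hΩ : IsClosed Ω) (hΩb : IsBounded Ω) (hbd : {x ∈ Ω | f x = 0} = frontier Ω)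
    (hz : z ∈ interior Ω) :
    ∃ ρ, 0 < ρ ∧ connectedComponentIn (interior Ω) z = ball (potentialCenter ν f z) ρ ∧
      (∀ x ∈ connectedComponentIn (interior Ω) z,
        potentialCenter ν f x = potentialCenter ν f z) ∧
      ∀ x ∈ closedBall (potentialCenter ν f z) ρ,
        2 * ν * f x + ‖x - potentialCenter ν f z‖ ^ 2 = ρ ^ 2 := by
  set U := connectedComponentIn (interior Ω) z
  have hUo : IsOpen U := isOpen_interior.connectedComponentIn
  have hUΩ : U ⊆ interior Ω := connectedComponentIn_subset _ _
  have hzU : z ∈ U := mem_connectedComponentIn hz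
  obtain ⟨a, ha⟩ := hUo.exists_potentialCenter_eq isPreconnected_connectedComponentIn hf
    fun x hx ↦ hH x (hUΩ hx)
  obtain ⟨r, hr⟩ := hUo.exists_two_mul_add_norm_sq_eq isPreconnected_connectedComponentIn
    (hf.differentiable two_ne_zero) ha
  have hr_cl : closure U ⊆ {x | 2 * ν * f x + ‖x - a‖ ^ 2 = r} :=
    (isClosed_eq (by fun_prop) continuous_const).closure_subset_iff.2 hr
  have hf_fr : ∀ x ∈ frontier U, f x = 0 := fun x hx ↦
    (hbd.symm ▸ frontier_connectedComponentIn_interior_subset hΩ z hx :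
      x ∈ {x ∈ Ω | f x = 0}).2
  have hf_U : ∀ x ∈ U, f x ≠ 0 := fun x hx h0 ↦ by
    have hxΩ : x ∈ {x ∈ Ω | f x = 0} := ⟨interior_subset (hUΩ hx), h0⟩
    rw [hbd, hΩ.frontier_eq] at hxΩ
    exact hxΩ.2 (hUΩ hx)
  obtain ⟨ρ, rfl, hUball⟩ := hUo.eq_ball_of_two_mul_add_norm_sq_eq
    (hΩb.subset (hUΩ.trans interior_subset)) ⟨z, hzU⟩ hν hr_cl hf_fr hf_U
  have hρ : 0 < ρ := pos_of_mem_ball (hUball ▸ hzU)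
  obtain rfl : potentialCenter ν f z = a := ha z hzU
  exact ⟨ρ, hρ, hUball, ha, fun x hx ↦ hr_cl (by rwa [hUball, closure_ball _ hρ.ne'])⟩

theorem exists_eq_closedBall_of_fderiv_fderiv_eq (hf : ContDiff ℝ 2 f) (hν : ν ≠ 0)
    (hH : ∀ x ∈ interior Ω, ∀ v w, ν * fderiv ℝ (fderiv ℝ f) x v w = -⟪v, w⟫)
    (hΩb : IsBounded Ω) (hΩc : IsPreconnected Ω) (hΩreg : Ω = closure (interior Ω))
    (hΩint : (interior Ω).Nonempty) (hbd : {x ∈ Ω | f x = 0} = frontier Ω) :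
    ∃ a ρ, 0 < ρ ∧ Ω = closedBall a ρ ∧ ∀ x ∈ Ω, 2 * ν * f x + ‖x - a‖ ^ 2 = ρ ^ 2 := by
  have hΩcl : IsClosed Ω := hΩreg ▸ isClosed_closure
  have hball := fun z (hz : z ∈ interior Ω) ↦
    connectedComponentIn_interior_eq_ball hf hν hH hΩcl hΩb hbd hz
  obtain ⟨z₀, hz₀⟩ := hΩint
  obtain ⟨ρ₀, hρ₀, hU₀, hψ₀, hf₀⟩ := hball z₀ hz₀
  set a₀ := potentialCenter ν f z₀
  have hsep : ∀ z ∈ interior Ω, potentialCenter ν f z ∈ insert a₀ (ball a₀ ρ₀)ᶜ := by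
    intro z hz
    by_cases hzU : z ∈ connectedComponentIn (interior Ω) z₀
    · exact Or.inl (hψ₀ z hzU)
    obtain ⟨ρ, hρ, hU, -, -⟩ := hball z hz
    refine Or.inr fun hzb ↦ hzU ?_
    rw [← connectedComponentIn_eq_of_mem_of_mem (hU ▸ mem_ball_self hρ) (hU₀ ▸ hzb)]
    exact mem_connectedComponentIn hz
  have hψΩ : ∀ x ∈ Ω, potentialCenter ν f x = a₀ := by
    have hcont := continuous_potentialCenter (ν := ν) (hf.continuous_fderiv two_ne_zero)
    have hclosed : IsClosed (insert a₀ (ball a₀ ρ₀)ᶜ) :=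
      isClosed_singleton.union isOpen_ball.isClosed_compl
    have himage : potentialCenter ν f '' Ω ⊆ insert a₀ (ball a₀ ρ₀)ᶜ := by
      rw [image_subset_iff, hΩreg]
      exact (hclosed.preimage hcont).closure_subset_iff.2 hsep
    exact fun x hx ↦ (hΩc.image _ hcont.continuousOn).subset_singleton_of_subset_insert_compl_ball
      ⟨z₀, interior_subset hz₀, rfl⟩ hρ₀ himage ⟨x, hx, rfl⟩
  have hint : interior Ω = ball a₀ ρ₀ := by
    refine hU₀ ▸ subset_antisymm (fun z hz ↦ ?_) (connectedComponentIn_subset _ _)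
    obtain ⟨ρ, hρ, hU, -, -⟩ := hball z hz
    rw [hψΩ z (interior_subset hz)] at hU
    rw [← connectedComponentIn_eq_of_mem_of_mem (hU ▸ mem_ball_self hρ)
      (hU₀ ▸ mem_ball_self hρ₀)]
    exact mem_connectedComponentIn hz
  have hΩball : Ω = closedBall a₀ ρ₀ := by
    rw [hΩreg, hint, closure_ball _ hρ₀.ne']
  exact ⟨a₀, ρ₀, hρ₀, hΩball, hΩball ▸ hf₀⟩

end Center

section MiaoTam

variable {n : ℕ} {f : EuclideanSpace ℝ (Fin n) → ℝ} {x : EuclideanSpace ℝ (Fin n)}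

theorem hess_eq_fderiv_fderiv (v w : EuclideanSpace ℝ (Fin n)) :
    Hess f x v w = fderiv ℝ (fderiv ℝ f) x v w := by
  simp [Hess, iteratedFDeriv_two_apply]

theorem sub_one_mul_hess_eq_neg_inner
    (h : ∀ v w : EuclideanSpace ℝ (Fin n), Hess f x v w - lap f x * ⟪v, w⟫ = ⟪v, w⟫)
    (v w : EuclideanSpace ℝ (Fin n)) : ((n : ℝ) - 1) * Hess f x v w = -⟪v, w⟫ := by
  have hdiag : ∀ i : Fin n, Hess f x (EuclideanSpace.single i 1) (EuclideanSpace.single i 1)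
      = 1 + lap f x := fun i ↦ by
    have := h (EuclideanSpace.single i 1) (EuclideanSpace.single i 1)
    rw [real_inner_self_eq_norm_sq, PiLp.norm_single, norm_one, one_pow, mul_one] at this
    linarith
  have htrace : lap f x = n * (1 + lap f x) := calc
    lap f x = ∑ _i : Fin n, (1 + lap f x) := Finset.sum_congr rfl fun i _ ↦ hdiag i
    _ = n * (1 + lap f x) := by
      rw [Finset.sum_const, Finset.card_univ, Fintype.card_fin, nsmul_eq_mul]
  have := h v w
  linear_combination (n - 1) * this - ⟪v, w⟫ * htrace

end MiaoTam

/-- Euclidean case of Miao–Tam's rigidity theorem: a compact connected domain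
(equal to the closure of its nonempty interior) carrying a `C²` solution of the flat
Miao–Tam equation whose zero set within the domain is exactly the boundary must be a
closed ball, with `f` the model quadratic potential. -/
theorem stmt_7 (n : ℕ) (hn : 3 ≤ n) (Ω : Set (EuclideanSpace ℝ (Fin n)))
    (hΩcpt : IsCompact Ω) (hΩconn : IsConnected Ω)
    (hΩreg : Ω = closure (interior Ω)) (hΩint : (interior Ω).Nonempty)
    (f : EuclideanSpace ℝ (Fin n) → ℝ) (hf : ContDiff ℝ 2 f)
    (heq : ∀ x ∈ Ω, ∀ v w : EuclideanSpace ℝ (Fin n),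
      Hess f x v w - lap f x * ⟪v, w⟫ = ⟪v, w⟫)
    (hbd : {x ∈ Ω | f x = 0} = frontier Ω) :
    ∃ (a : EuclideanSpace ℝ (Fin n)) (ρ : ℝ), 0 < ρ ∧
      Ω = Metric.closedBall a ρ ∧
      ∀ x ∈ Ω, f x = (ρ ^ 2 - ‖x - a‖ ^ 2) / (2 * ((n : ℝ) - 1)) := by
  have hν : (0 : ℝ) < n - 1 := by
    have : (3 : ℝ) ≤ n := by exact_mod_cast hn
    linarith
  have : Nonempty (Fin n) := ⟨⟨0, by omega⟩⟩
  obtain ⟨a, ρ, hρ, hΩ, hfΩ⟩ := exists_eq_closedBall_of_fderiv_fderiv_eq hf hν.ne'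
    (fun x hx v w ↦ hess_eq_fderiv_fderiv v w ▸
      sub_one_mul_hess_eq_neg_inner (heq x (interior_subset hx)) v w)
    hΩcpt.isBounded hΩconn.isPreconnected hΩreg hΩint hbd
  refine ⟨a, ρ, hρ, hΩ, fun x hx ↦ ?_⟩
  rw [eq_div_iff (by positivity), ← hfΩ x hx]
  ring
end

section
/- Let A be a real symmetric 3×3 matrix with trace A = 0. Then trace(A³) ≥ −(1/√6)·(trace(A²))^{3/2}. -/
/-!
Diagonalize `A`: its eigenvalues `a, b, c` satisfy `a + b + c = 0`, and `trace(Aᵏ) = aᵏ + bᵏ + cᵏ`.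
For such triples `(a² + b² + c²)³ - 6 (a³ + b³ + c³)² = 2 ((a - b)(b - c)(c - a))²` (twice the
discriminant of the characteristic polynomial), so `6 trace(A³)² ≤ trace(A²)³`; taking square
roots gives the bound.
-/

open Matrix in
theorem Matrix.IsHermitian.trace_pow_eq_sum_eigenvalues_pow {𝕜 n : Type*} [RCLike 𝕜] [Fintype n]
    [DecidableEq n] {A : Matrix n n 𝕜} (hA : A.IsHermitian) (k : ℕ) :
    (A ^ k).trace = ∑ i, (hA.eigenvalues i : 𝕜) ^ k := by
  conv_lhs => rw [hA.spectral_theorem]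
  rw [← map_pow, diagonal_pow, Unitary.conjStarAlgAut_apply, trace_mul_cycle,
    Unitary.coe_star_mul_self, Matrix.one_mul, trace_diagonal]
  rfl

theorem sum_sq_cube_sub_six_mul_sum_cube_sq {a b c : ℝ} (h : a + b + c = 0) :
    (a ^ 2 + b ^ 2 + c ^ 2) ^ 3 - 6 * (a ^ 3 + b ^ 3 + c ^ 3) ^ 2
      = 2 * ((a - b) * (b - c) * (c - a)) ^ 2 := by
  obtain rfl : c = -a - b := by linarith
  ring

theorem six_mul_sum_cube_sq_le {a b c : ℝ} (h : a + b + c = 0) :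
    6 * (a ^ 3 + b ^ 3 + c ^ 3) ^ 2 ≤ (a ^ 2 + b ^ 2 + c ^ 2) ^ 3 :=
  sub_nonneg.mp (by rw [sum_sq_cube_sub_six_mul_sum_cube_sq h]; positivity)

theorem neg_one_div_sqrt_six_mul_rpow_le {s t : ℝ} (hs : 0 ≤ s) (h : 6 * t ^ 2 ≤ s ^ 3) :
    -(1 / √6) * s ^ ((3 : ℝ) / 2) ≤ t := by
  have hpow : (s ^ ((3 : ℝ) / 2)) ^ 2 = s ^ 3 := by
    rw [← Real.rpow_natCast, ← Real.rpow_mul hs]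
    norm_num
  have hsq : (√6 * t) ^ 2 ≤ (s ^ ((3 : ℝ) / 2)) ^ 2 := by
    rwa [mul_pow, Real.sq_sqrt (by norm_num), hpow]
  rw [neg_mul, one_div_mul_eq_div, ← neg_div, div_le_iff₀' (by positivity)]
  exact (abs_le_of_sq_le_sq' hsq (by positivity)).1

/-- Okumura's lemma in dimension three: a real symmetric traceless `3 × 3` matrix
satisfies `trace(A³) ≥ −(1/√6)·(trace(A²))^{3/2}`. -/
theorem stmt_8 (A : Matrix (Fin 3) (Fin 3) ℝ) (hA : A.IsSymm) (h0 : A.trace = 0) :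
    (A ^ 3).trace ≥ -(1 / Real.sqrt 6) * ((A ^ 2).trace) ^ ((3 : ℝ) / 2) := by
  have hH : A.IsHermitian := Matrix.isHermitian_iff_isSymm.mpr hA
  have htr (k : ℕ) : (A ^ k).trace = ∑ i, hH.eigenvalues i ^ k := by
    simpa using hH.trace_pow_eq_sum_eigenvalues_pow k
  have hsum : ∑ i, hH.eigenvalues i = 0 := by simpa [h0] using (htr 1).symm
  simp only [Fin.sum_univ_three] at htr hsum
  rw [htr 2, htr 3]
  exact neg_one_div_sqrt_six_mul_rpow_le (by positivity) (six_mul_sum_cube_sq_le hsum)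
end
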